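/- arXiv:2209.09284 — 3 statements merged into one kernel-verified Lean document; each statement's English description precedes it below -/
import Mathlib

section
/- Let r > 0 and let φ ∈ C^1(ℝ^d; ℝ^d) be locally integrable with div φ = 0 on ℝ^d. Then ∫_{{x : r < |x| < 2r}} div(E_r[φ])(x) dx = 0. -/
open MeasureTheory Metric
open scoped ENNReal NNReal

/-- The restriction-type operator
`E_r(h)[φ](x) = (⨍_{B_r(h)} φ) H(2 - |x-h|/r) + φ(x) H(|x-h|/r - 1)`. -/
noncomputable def Eop {d m : ℕ} (H : ℝ → ℝ) (r : ℝ) (h : EuclideanSpace ℝ (Fin d))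
    (φ : EuclideanSpace ℝ (Fin d) → EuclideanSpace ℝ (Fin m))
    (x : EuclideanSpace ℝ (Fin d)) : EuclideanSpace ℝ (Fin m) :=
  H (2 - ‖x - h‖ / r) • (⨍ y in ball h r, φ y) + H (‖x - h‖ / r - 1) • φ x

/-- The divergence `div v = Σ_j ∂v_j/∂x_j` of a vector field on `ℝ^d`. -/
noncomputable def diverg {d : ℕ}
    (v : EuclideanSpace ℝ (Fin d) → EuclideanSpace ℝ (Fin d))
    (x : EuclideanSpace ℝ (Fin d)) : ℝ :=
  ∑ j : Fin d, fderiv ℝ v x (EuclideanSpace.single j 1) j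

/-- For a solenoidal `C^1` field `φ`, the divergence of `E_r[φ] = E_r(0)[φ]`
has zero mean over the annulus `{r < |x| < 2r}`. -/
theorem integral_diverg_Eop_annulus_eq_zero {d : ℕ} (H : ℝ → ℝ)
    (hH : ContDiff ℝ (⊤ : ℕ∞) H)
    (hH01 : ∀ Z : ℝ, 0 ≤ H Z ∧ H Z ≤ 1)
    (hH0 : ∀ Z : ℝ, Z ≤ 1 / 4 → H Z = 0)
    (hH1 : ∀ Z : ℝ, 3 / 4 ≤ Z → H Z = 1)
    (hHsymm : ∀ Z : ℝ, deriv H Z = deriv H (1 - Z))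
    (r : ℝ) (hr : 0 < r)
    (φ : EuclideanSpace ℝ (Fin d) → EuclideanSpace ℝ (Fin d))
    (hφ : ContDiff ℝ 1 φ)
    (hφloc : LocallyIntegrable φ volume)
    (hdiv : ∀ x, diverg φ x = 0) :
    ∫ x in {x : EuclideanSpace ℝ (Fin d) | r < ‖x‖ ∧ ‖x‖ < 2 * r},
      diverg (Eop H r 0 φ) x = 0 := by
  set c : (EuclideanSpace ℝ (Fin d)) := ⨍ y in ball (0 : (EuclideanSpace ℝ (Fin d))) r, φ y with hc
  -- Key identity: H s + H (1 - s) = 1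
  have key : ∀ s : ℝ, H s + H (1 - s) = 1 := by
    intro s
    have hd1 : Differentiable ℝ H := hH.differentiable (by simp)
    have hd2 : Differentiable ℝ (fun t : ℝ => H (1 - t)) :=
      hd1.comp ((differentiable_const 1).sub differentiable_id)
    have hdiff : Differentiable ℝ (fun t : ℝ => H t + H (1 - t)) := hd1.add hd2
    have hderiv : ∀ t : ℝ, deriv (fun t : ℝ => H t + H (1 - t)) t = 0 := by
      intro t
      rw [deriv_fun_add (hd1 t) (hd2 t), deriv_comp_const_sub, hHsymm t]
      ring
    have := is_const_of_deriv_eq_zero hdiff hderiv s 0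
    have h0 : H 0 = 0 := hH0 0 (by norm_num)
    have h1 : H 1 = 1 := hH1 1 (by norm_num)
    simpa [h0, h1] using this
  set G : (EuclideanSpace ℝ (Fin d)) → ℝ := fun x => H (‖x‖ / r - 1) with hG
  set u : (EuclideanSpace ℝ (Fin d)) → (EuclideanSpace ℝ (Fin d)) := fun x => (G x - 1) • (φ x - c) with hu
  -- smoothness of G
  have hGc : ContDiff ℝ 1 G := by
    rw [contDiff_iff_contDiffAt]
    intro x
    by_cases hx : x = 0
    · apply ContDiffAt.congr_of_eventuallyEq (contDiffAt_const (c := (0 : ℝ)))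
      have hmem : ball (0 : (EuclideanSpace ℝ (Fin d))) r ∈ nhds x := by
        rw [hx]; exact ball_mem_nhds _ hr
      filter_upwards [hmem] with y hy
      apply hH0
      have : ‖y‖ < r := by simpa using hy
      have : ‖y‖ / r < 1 := (div_lt_one hr).2 this
      linarith
    · exact (hH.of_le (by simp)).contDiffAt.comp x
        (((contDiffAt_id.norm ℝ hx).div_const r).sub contDiffAt_const)
  have huC : ContDiff ℝ 1 u :=
    (hGc.sub contDiff_const).smul (hφ.sub (contDiff_const (c := c)))
  have husupp : HasCompactSupport u := by
    apply HasCompactSupport.intro (isCompact_closedBall (0 : (EuclideanSpace ℝ (Fin d))) (2 * r))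
    intro x hx
    have hxn : 2 * r < ‖x‖ := by simpa [dist_eq_norm] using hx
    have hG1 : G x = 1 := by
      apply hH1
      rw [le_sub_iff_add_le, le_div_iff₀ hr]
      nlinarith
    simp [hu, hG1]
  -- Eop = u + φ
  have hEop : Eop H r 0 φ = fun x => u x + φ x := by
    funext x
    have h2 : H (2 - ‖x‖ / r) = 1 - G x := by
      have hk := key (‖x‖ / r - 1)
      have he : (2 : ℝ) - ‖x‖ / r = 1 - (‖x‖ / r - 1) := by ring
      rw [he]
      simp only [hG]
      linarith
    simp only [Eop, sub_zero, h2, hu, hG, ← hc]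
    module
  -- diverg Eop = diverg u
  have hdivE : ∀ x, diverg (Eop H r 0 φ) x = diverg u x := by
    intro x
    rw [hEop]
    unfold diverg
    have h1 : fderiv ℝ (fun x => u x + φ x) x = fderiv ℝ u x + fderiv ℝ φ x :=
      fderiv_fun_add (huC.differentiable one_ne_zero x) (hφ.differentiable one_ne_zero x)
    rw [h1]
    have h2 := hdiv x
    unfold diverg at h2
    simp only [ContinuousLinearMap.add_apply, PiLp.add_apply, Finset.sum_add_distrib, h2,
      add_zero]
  -- diverg u vanishes outside the annulus
  have hvanish : ∀ x : (EuclideanSpace ℝ (Fin d)), x ∉ {x : (EuclideanSpace ℝ (Fin d)) | r < ‖x‖ ∧ ‖x‖ < 2 * r} → diverg u x = 0 := by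
    intro x hx
    simp only [Set.mem_setOf_eq, not_and, not_lt] at hx
    by_cases hxr : r < ‖x‖
    · -- outer region : ‖x‖ ≥ 2r, u = 0 near x
      have hx2 : 2 * r ≤ ‖x‖ := hx hxr
      have hev : u =ᶠ[nhds x] fun _ => (0 : (EuclideanSpace ℝ (Fin d))) := by
        have hopen : IsOpen {y : (EuclideanSpace ℝ (Fin d)) | 7 * r / 4 < ‖y‖} :=
          isOpen_lt continuous_const continuous_norm
        have hmem : {y : (EuclideanSpace ℝ (Fin d)) | 7 * r / 4 < ‖y‖} ∈ nhds x := by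
          apply hopen.mem_nhds
          show 7 * r / 4 < ‖x‖
          nlinarith
        filter_upwards [hmem] with y hy
        have : G y = 1 := by
          apply hH1
          have : 7 * r / 4 < ‖y‖ := hy
          rw [le_sub_iff_add_le, le_div_iff₀ hr]
          nlinarith
        simp [hu, this]
      have : fderiv ℝ u x = 0 := by
        rw [hev.fderiv_eq]; exact fderiv_const_apply 0
      simp [diverg, this]
    · -- inner region : ‖x‖ ≤ r, u = c - φ near x
      push_neg at hxr
      have hev : u =ᶠ[nhds x] fun y => c - φ y := by
        have hmem : ball (0 : (EuclideanSpace ℝ (Fin d))) (5 * r / 4) ∈ nhds x := by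
          apply (isOpen_ball).mem_nhds
          simp only [mem_ball, dist_zero_right]
          nlinarith
        filter_upwards [hmem] with y hy
        have hyn : ‖y‖ < 5 * r / 4 := by simpa using hy
        have : G y = 0 := by
          apply hH0
          rw [sub_le_iff_le_add, div_le_iff₀ hr]
          nlinarith
        simp [hu, this]
      have h1 : fderiv ℝ u x = -fderiv ℝ φ x := by
        rw [hev.fderiv_eq]
        exact (((hφ.differentiable one_ne_zero x).hasFDerivAt).const_sub c).fderiv
      have h2 := hdiv x
      unfold diverg at h2
      simp only [diverg, h1, ContinuousLinearMap.neg_apply, PiLp.neg_apply,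
        Finset.sum_neg_distrib, h2, neg_zero]
  -- the vector-valued integral of fderiv u applied to any direction is zero
  have hcf : Continuous (fderiv ℝ u) := huC.continuous_fderiv one_ne_zero
  have hcsf : HasCompactSupport (fderiv ℝ u) := husupp.fderiv (𝕜 := ℝ)
  have hvec : ∀ v : (EuclideanSpace ℝ (Fin d)), ∫ x, fderiv ℝ u x v = 0 := by
    intro v
    have hcont : Continuous fun x => fderiv ℝ u x v := hcf.clm_apply continuous_const
    have hcs : HasCompactSupport fun x => fderiv ℝ u x v :=
      hcsf.comp_left (g := fun T : (EuclideanSpace ℝ (Fin d)) →L[ℝ] (EuclideanSpace ℝ (Fin d)) => T v) rfl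
    have hint : Integrable (fun x => fderiv ℝ u x v) volume :=
      hcont.integrable_of_hasCompactSupport hcs
    have hintu : Integrable u volume :=
      (huC.continuous).integrable_of_hasCompactSupport husupp
    have h := integral_smul_fderiv_eq_neg_fderiv_smul_of_integrable (μ := volume)
        (f := fun _ : (EuclideanSpace ℝ (Fin d)) => (1 : ℝ)) (g := u) (v := v)
        (by simpa using (integrable_zero (EuclideanSpace ℝ (Fin d)) (EuclideanSpace ℝ (Fin d)) (volume : Measure (EuclideanSpace ℝ (Fin d)))))
        (by simpa using hint) (by simpa using hintu)
        (fun x _ => (differentiable_const (1 : ℝ)) x) (fun x _ => huC.differentiable one_ne_zero x)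
    simpa using h
  -- put everything together
  have hdivu_int : ∀ j : Fin d,
      Integrable (fun x => fderiv ℝ u x (EuclideanSpace.single j 1) j) volume := by
    intro j
    have hcont : Continuous fun x => fderiv ℝ u x (EuclideanSpace.single j 1) j := by
      exact (EuclideanSpace.proj j).continuous.comp
        (hcf.clm_apply continuous_const)
    have hcs : HasCompactSupport fun x => fderiv ℝ u x (EuclideanSpace.single j 1) j :=
      hcsf.comp_left (g := fun T : (EuclideanSpace ℝ (Fin d)) →L[ℝ] (EuclideanSpace ℝ (Fin d)) => T (EuclideanSpace.single j 1) j) rfl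
    exact hcont.integrable_of_hasCompactSupport hcs
  calc ∫ x in {x : (EuclideanSpace ℝ (Fin d)) | r < ‖x‖ ∧ ‖x‖ < 2 * r}, diverg (Eop H r 0 φ) x
      = ∫ x in {x : (EuclideanSpace ℝ (Fin d)) | r < ‖x‖ ∧ ‖x‖ < 2 * r}, diverg u x := by
        simp only [funext hdivE]
    _ = ∫ x, diverg u x := setIntegral_eq_integral_of_forall_compl_eq_zero hvanish
    _ = ∑ j : Fin d, ∫ x, fderiv ℝ u x (EuclideanSpace.single j 1) j := by
        rw [← integral_finset_sum _ (fun j _ => hdivu_int j)]; rfl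
    _ = 0 := by
        apply Finset.sum_eq_zero
        intro j _
        have hint : Integrable (fun x => fderiv ℝ u x (EuclideanSpace.single j 1)) volume := by
          have hcont : Continuous fun x => fderiv ℝ u x (EuclideanSpace.single j 1) :=
            hcf.clm_apply continuous_const
          have hcs : HasCompactSupport fun x => fderiv ℝ u x (EuclideanSpace.single j 1) :=
            hcsf.comp_left (g := fun T : (EuclideanSpace ℝ (Fin d)) →L[ℝ] (EuclideanSpace ℝ (Fin d)) => T (EuclideanSpace.single j 1)) rfl
          exact hcont.integrable_of_hasCompactSupport hcs
        have h0 := hvec (EuclideanSpace.single j 1)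
        calc ∫ x, fderiv ℝ u x (EuclideanSpace.single j 1) j
            = ∫ x, (EuclideanSpace.proj j) (fderiv ℝ u x (EuclideanSpace.single j 1)) := rfl
          _ = (EuclideanSpace.proj j) (∫ x, fderiv ℝ u x (EuclideanSpace.single j 1)) :=
              ContinuousLinearMap.integral_comp_comm _ hint
          _ = 0 := by rw [h0]; simp
end

section
/- Let d, m ≥ 1, N ≥ 1, let h_1, …, h_N ∈ ℝ^d, and let r_1, …, r_N > 0 satisfy r_{n+1} ≥ 5 r_n for n = 1, …, N−1. For each n ∈ {1, …, N} let R_n be a map sending functions ℝ^d → ℝ^m to functions ℝ^d → ℝ^m such that, for every function φ : ℝ^d → ℝ^m: (a) R_n[φ] is constant on the open ball B_{r_n}(h_n); (b) R_n[φ](x) = φ(x) for every x with |x − h_n| > 2 r_n; (c) if φ is constant on B_{2 r_n}(h_n), then R_n[φ] = φ on all of ℝ^d. Then for every function φ : ℝ^d → ℝ^m and every i ∈ {1, …, N}, the composition (R_1 ∘ R_2 ∘ ⋯ ∘ R_N)[φ] is constant on the open ball B_{r_1}(h_i); that is, there are constant vectors Λ_1, …, Λ_N ∈ ℝ^m with (R_1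 ∘ ⋯ ∘ R_N)[φ] = Λ_i on B_{r_1}(h_i) for each i. -/
/-!
Induct on the number of maps. If `ψ := R_2 ∘ ⋯ ∘ R_N [φ]` is constant on `B_{r_2}(h_i)`, then
`R_1[ψ]` stays constant on the smaller ball `B_{r_1}(h_i)`: either `h_1` is within `3 r_1` of `h_i`,
so that `B_{2 r_1}(h_1) ⊆ B_{5 r_1}(h_i) ⊆ B_{r_2}(h_i)` and (c) gives `R_1[ψ] = ψ`, or it is
farther, so that `B_{r_1}(h_i)` lies outside `B_{2 r_1}(h_1)` and (b) gives `R_1[ψ] = ψ` there.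
-/

open Metric

def compAll {α : Type*} : (n : ℕ) → (Fin n → (α → α)) → (α → α)
  | 0, _ => id
  | n + 1, F => F 0 ∘ compAll n (fun i => F i.succ)

section

variable {α β : Type*} [PseudoMetricSpace α]

theorem apply_eq_on_ball_of_localized {R : (α → β) → α → β} {ψ : α → β}
    {c c' : α} {ρ s : ℝ} {Λ : β}
    (hb : ∀ x, 2 * ρ < dist x c → R ψ x = ψ x)
    (hc : (∃ v, ∀ x ∈ ball c (2 * ρ), ψ x = v) → R ψ = ψ)
    (hs : 5 * ρ ≤ s) (hψ : ∀ x ∈ ball c' s, ψ x = Λ) :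
    ∀ x ∈ ball c' ρ, R ψ x = Λ := by
  intro x hx
  rw [mem_ball] at hx
  have hρ : 0 < ρ := lt_of_le_of_lt dist_nonneg hx
  by_cases hnear : dist c c' ≤ 3 * ρ
  · have hsub : ball c (2 * ρ) ⊆ ball c' s := ball_subset_ball' (by linarith)
    rw [hc ⟨Λ, fun y hy => hψ y (hsub hy)⟩]
    exact hψ x (mem_ball.mpr (by linarith))
  · have hfar : 2 * ρ < dist x c := by
      linarith [dist_triangle_left c c' x]
    rw [hb x hfar]
    exact hψ x (mem_ball.mpr (by linarith))

theorem compAll_eq_on_ball {N : ℕ} (c : Fin N → α) (r : Fin N → ℝ)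
    (hr5 : ∀ n : Fin N, ∀ hn : (n : ℕ) + 1 < N, 5 * r n ≤ r ⟨(n : ℕ) + 1, hn⟩)
    (R : Fin N → (α → β) → α → β)
    (ha : ∀ n φ, ∃ Λ, ∀ x ∈ ball (c n) (r n), R n φ x = Λ)
    (hb : ∀ n φ x, 2 * r n < dist x (c n) → R n φ x = φ x)
    (hc : ∀ n φ, (∃ v, ∀ x ∈ ball (c n) (2 * r n), φ x = v) → R n φ = φ)
    (φ : α → β) (i : Fin N) :
    ∃ Λ, ∀ x ∈ ball (c i) (r ⟨0, i.pos⟩), compAll N R φ x = Λ := by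
  induction N with
  | zero => exact i.elim0
  | succ N ih =>
    rcases Fin.eq_zero_or_eq_succ i with rfl | ⟨j, rfl⟩
    · exact ha 0 _
    · obtain ⟨Λ, hΛ⟩ := ih (fun k => c k.succ) (fun k => r k.succ)
        (fun k hk => hr5 k.succ (Nat.succ_lt_succ hk)) (fun k => R k.succ)
        (fun k => ha k.succ) (fun k => hb k.succ) (fun k => hc k.succ) j
      exact ⟨Λ, apply_eq_on_ball_of_localized (R := R 0)
        (ψ := compAll N (fun k => R k.succ) φ) (hb 0 _) (hc 0 _)
        (hr5 0 (Nat.succ_lt_succ j.pos)) hΛ⟩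

end

theorem composition_constant_on_balls_general
    (d m N : ℕ) (hN : 1 ≤ N)
    (h : Fin N → EuclideanSpace ℝ (Fin d))
    (r : Fin N → ℝ)
    (hr5 : ∀ n : Fin N, ∀ hn : (n : ℕ) + 1 < N, 5 * r n ≤ r ⟨(n : ℕ) + 1, hn⟩)
    (R : Fin N →
      (EuclideanSpace ℝ (Fin d) → EuclideanSpace ℝ (Fin m)) →
      (EuclideanSpace ℝ (Fin d) → EuclideanSpace ℝ (Fin m)))
    (ha : ∀ (n : Fin N) (φ : EuclideanSpace ℝ (Fin d) → EuclideanSpace ℝ (Fin m)),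
      ∃ Λ, ∀ x ∈ ball (h n) (r n), R n φ x = Λ)
    (hb : ∀ (n : Fin N) (φ : EuclideanSpace ℝ (Fin d) → EuclideanSpace ℝ (Fin m))
      (x : EuclideanSpace ℝ (Fin d)), 2 * r n < ‖x - h n‖ → R n φ x = φ x)
    (hc : ∀ (n : Fin N) (φ : EuclideanSpace ℝ (Fin d) → EuclideanSpace ℝ (Fin m)),
      (∃ v, ∀ x ∈ ball (h n) (2 * r n), φ x = v) → R n φ = φ) :
    ∀ (φ : EuclideanSpace ℝ (Fin d) → EuclideanSpace ℝ (Fin m)) (i : Fin N),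
      ∃ Λ : EuclideanSpace ℝ (Fin m),
        ∀ x ∈ ball (h i) (r ⟨0, hN⟩), compAll N R φ x = Λ :=
  compAll_eq_on_ball h r hr5 R ha
    (fun n φ x hx => hb n φ x (by rwa [← dist_eq_norm])) hc

/-- Lemma 4.2 of the paper: if each map `R n` (a) produces functions constant on
`B_{r_n}(h_n)`, (b) acts as the identity outside `B_{2 r_n}(h_n)`, and (c) leaves
unchanged any function constant on `B_{2 r_n}(h_n)`, and if `r_{n+1} ≥ 5 r_n`,
then the composition `R_1 ∘ ⋯ ∘ R_N` applied to any function is constant on each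
ball `B_{r_1}(h_i)`. -/
theorem composition_constant_on_balls
    (d m N : ℕ) (hd : 1 ≤ d) (hm : 1 ≤ m) (hN : 1 ≤ N)
    (h : Fin N → EuclideanSpace ℝ (Fin d))
    (r : Fin N → ℝ) (hr : ∀ n, 0 < r n)
    (hr5 : ∀ n : Fin N, ∀ hn : (n : ℕ) + 1 < N, 5 * r n ≤ r ⟨(n : ℕ) + 1, hn⟩)
    (R : Fin N →
      (EuclideanSpace ℝ (Fin d) → EuclideanSpace ℝ (Fin m)) →
      (EuclideanSpace ℝ (Fin d) → EuclideanSpace ℝ (Fin m)))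
    (ha : ∀ (n : Fin N) (φ : EuclideanSpace ℝ (Fin d) → EuclideanSpace ℝ (Fin m)),
      ∃ Λ, ∀ x ∈ ball (h n) (r n), R n φ x = Λ)
    (hb : ∀ (n : Fin N) (φ : EuclideanSpace ℝ (Fin d) → EuclideanSpace ℝ (Fin m))
      (x : EuclideanSpace ℝ (Fin d)), 2 * r n < ‖x - h n‖ → R n φ x = φ x)
    (hc : ∀ (n : Fin N) (φ : EuclideanSpace ℝ (Fin d) → EuclideanSpace ℝ (Fin m)),
      (∃ v, ∀ x ∈ ball (h n) (2 * r n), φ x = v) → R n φ = φ) :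
    ∀ (φ : EuclideanSpace ℝ (Fin d) → EuclideanSpace ℝ (Fin m)) (i : Fin N),
      ∃ Λ : EuclideanSpace ℝ (Fin m),
        ∀ x ∈ ball (h i) (r ⟨0, hN⟩), compAll N R φ x = Λ :=
  composition_constant_on_balls_general d m N hN h r hr5 R ha hb hc
end

section
/- Let r > 0 and let φ ∈ C^∞_c(ℝ^d; ℝ^m). For h, x ∈ ℝ^d set F(h, x) = E_r(h)[φ](x). Then for every fixed x the map h ↦ F(h, x) is differentiable, and for every j ∈ {1, …, d}, ∂F/∂h_j (h, x) = E_r(h)[∂φ/∂x_j](x) − ∂/∂x_j (E_r(h)[φ])(x), where E_r(h)[∂φ/∂x_j] denotes the operator E_r(h) applied componentwise to the partial derivative ∂φ/∂x_j. -/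
open MeasureTheory Metric

open scoped Convolution

variable {d m : ℕ}

lemma cutA_diff {H : ℝ → ℝ} (hH : ContDiff ℝ (⊤ : ℕ∞) H)
    (hH1 : ∀ Z : ℝ, 3 / 4 ≤ Z → H Z = 1) {r : ℝ} (hr : 0 < r) :
    Differentiable ℝ (fun v : EuclideanSpace ℝ (Fin d) => H (2 - ‖v‖ / r)) := by
  intro v
  rcases eq_or_ne v 0 with rfl | hv
  · have hev : (fun v : EuclideanSpace ℝ (Fin d) => H (2 - ‖v‖ / r)) =ᶠ[nhds 0]
        fun _ => (1 : ℝ) := by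
      filter_upwards [Metric.ball_mem_nhds (0 : EuclideanSpace ℝ (Fin d)) hr] with w hw
      have hw' : ‖w‖ < r := by simpa using hw
      have : ‖w‖ / r < 1 := (div_lt_one hr).2 hw'
      have h0 : 0 ≤ ‖w‖ / r := div_nonneg (norm_nonneg _) hr.le
      exact hH1 _ (by linarith)
    exact (hev.differentiableAt_iff).2 (differentiableAt_const 1)
  · have hnorm : DifferentiableAt ℝ (fun v : EuclideanSpace ℝ (Fin d) => ‖v‖) v :=
      (differentiableAt_id).norm ℝ hv
    have hq : DifferentiableAt ℝ (fun v : EuclideanSpace ℝ (Fin d) => ‖v‖ / r) v := by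
      simp only [div_eq_mul_inv]; exact hnorm.mul_const r⁻¹
    exact ((hH.differentiable (by simp)) _).comp v ((differentiableAt_const (2:ℝ)).sub hq)

lemma cutB_diff {H : ℝ → ℝ} (hH : ContDiff ℝ (⊤ : ℕ∞) H)
    (hH0 : ∀ Z : ℝ, Z ≤ 1 / 4 → H Z = 0) {r : ℝ} (hr : 0 < r) :
    Differentiable ℝ (fun v : EuclideanSpace ℝ (Fin d) => H (‖v‖ / r - 1)) := by
  intro v
  rcases eq_or_ne v 0 with rfl | hv
  · have hev : (fun v : EuclideanSpace ℝ (Fin d) => H (‖v‖ / r - 1)) =ᶠ[nhds 0]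
        fun _ => (0 : ℝ) := by
      filter_upwards [Metric.ball_mem_nhds (0 : EuclideanSpace ℝ (Fin d)) hr] with w hw
      have hw' : ‖w‖ < r := by simpa using hw
      have : ‖w‖ / r < 1 := (div_lt_one hr).2 hw'
      exact hH0 _ (by linarith)
    exact (hev.differentiableAt_iff).2 (differentiableAt_const 0)
  · have hnorm : DifferentiableAt ℝ (fun v : EuclideanSpace ℝ (Fin d) => ‖v‖) v :=
      (differentiableAt_id).norm ℝ hv
    have hq : DifferentiableAt ℝ (fun v : EuclideanSpace ℝ (Fin d) => ‖v‖ / r) v := by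
      simp only [div_eq_mul_inv]; exact hnorm.mul_const r⁻¹
    exact ((hH.differentiable (by simp)) _).comp v (hq.sub_const 1)

lemma conv_eq_setIntegral (r : ℝ) (ψ : EuclideanSpace ℝ (Fin d) → EuclideanSpace ℝ (Fin m))
    (h : EuclideanSpace ℝ (Fin d)) :
    (((ball (0 : EuclideanSpace ℝ (Fin d)) r).indicator
        (fun _ => (1 : ℝ))) ⋆[ContinuousLinearMap.lsmul ℝ ℝ, volume] ψ) h
      = ∫ y in ball h r, ψ y := by
  rw [MeasureTheory.convolution_def]
  simp only [ContinuousLinearMap.lsmul_apply]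
  rw [← integral_sub_left_eq_self
      (fun t => (ball (0 : EuclideanSpace ℝ (Fin d)) r).indicator (fun _ => (1:ℝ)) t •
        ψ (h - t)) volume h,
    ← integral_indicator measurableSet_ball]
  congr 1
  funext t
  by_cases ht : t ∈ ball h r
  · have h1 : h - t ∈ ball (0 : EuclideanSpace ℝ (Fin d)) r := by
      rw [mem_ball_zero_iff, norm_sub_rev, ← dist_eq_norm]
      exact ht
    simp [Set.indicator_of_mem, ht, h1, sub_sub_cancel]
  · have h1 : h - t ∉ ball (0 : EuclideanSpace ℝ (Fin d)) r := by
      rw [mem_ball_zero_iff, norm_sub_rev, ← dist_eq_norm]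
      exact ht
    simp [Set.indicator_of_notMem, ht, h1]

lemma hasFDerivAt_average (r : ℝ)
    (φ : EuclideanSpace ℝ (Fin d) → EuclideanSpace ℝ (Fin m))
    (hφ : ContDiff ℝ (⊤ : ℕ∞) φ) (hφc : HasCompactSupport φ) (h : EuclideanSpace ℝ (Fin d)) :
    HasFDerivAt (fun h' : EuclideanSpace ℝ (Fin d) => ⨍ y in ball h' r, φ y)
      ((volume (ball (0 : EuclideanSpace ℝ (Fin d)) r)).toReal⁻¹ •
        ((((ball (0 : EuclideanSpace ℝ (Fin d)) r).indicator fun _ => (1 : ℝ))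
          ⋆[(ContinuousLinearMap.lsmul ℝ ℝ).precompR (EuclideanSpace ℝ (Fin d)), volume]
            fderiv ℝ φ) h)) h := by
  have hf : LocallyIntegrable ((ball (0 : EuclideanSpace ℝ (Fin d)) r).indicator
      fun _ => (1 : ℝ)) volume :=
    (locallyIntegrable_const 1).indicator measurableSet_ball
  have key := hφc.hasFDerivAt_convolution_right (ContinuousLinearMap.lsmul ℝ ℝ) hf
    (hφ.of_le (by simp)) h
  have key2 := key.const_smul ((volume (ball (0 : EuclideanSpace ℝ (Fin d)) r)).toReal⁻¹)
  have heq : (fun h' : EuclideanSpace ℝ (Fin d) => ⨍ y in ball h' r, φ y)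
      = fun h' => (volume (ball (0 : EuclideanSpace ℝ (Fin d)) r)).toReal⁻¹ •
        (((ball (0 : EuclideanSpace ℝ (Fin d)) r).indicator fun _ => (1 : ℝ))
          ⋆[ContinuousLinearMap.lsmul ℝ ℝ, volume] φ) h' := by
    funext h'
    rw [setAverage_eq, conv_eq_setIntegral, measureReal_def, Measure.addHaar_ball_center]
  rw [heq]
  exact key2

lemma average_fderiv_apply (r : ℝ)
    (φ : EuclideanSpace ℝ (Fin d) → EuclideanSpace ℝ (Fin m))
    (hφ : ContDiff ℝ (⊤ : ℕ∞) φ) (hφc : HasCompactSupport φ) (h e : EuclideanSpace ℝ (Fin d)) :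
    ((volume (ball (0 : EuclideanSpace ℝ (Fin d)) r)).toReal⁻¹ •
        ((((ball (0 : EuclideanSpace ℝ (Fin d)) r).indicator fun _ => (1 : ℝ))
          ⋆[(ContinuousLinearMap.lsmul ℝ ℝ).precompR (EuclideanSpace ℝ (Fin d)), volume]
            fderiv ℝ φ) h)) e = ⨍ y in ball h r, fderiv ℝ φ y e := by
  have hf : LocallyIntegrable ((ball (0 : EuclideanSpace ℝ (Fin d)) r).indicator
      fun _ => (1 : ℝ)) volume :=
    (locallyIntegrable_const 1).indicator measurableSet_ball
  rw [ContinuousLinearMap.smul_apply,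
    MeasureTheory.convolution_precompR_apply _ hf (hφc.fderiv ℝ)
      (hφ.continuous_fderiv (by simp)),
    conv_eq_setIntegral, setAverage_eq, measureReal_def, Measure.addHaar_ball_center volume h]

lemma Eop_center_fderiv {H : ℝ → ℝ} (hH : ContDiff ℝ (⊤ : ℕ∞) H)
    (hH0 : ∀ Z : ℝ, Z ≤ 1 / 4 → H Z = 0) (hH1 : ∀ Z : ℝ, 3 / 4 ≤ Z → H Z = 1)
    {r : ℝ} (hr : 0 < r)
    (φ : EuclideanSpace ℝ (Fin d) → EuclideanSpace ℝ (Fin m))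
    (hφ : ContDiff ℝ (⊤ : ℕ∞) φ) (hφc : HasCompactSupport φ)
    (x h : EuclideanSpace ℝ (Fin d)) :
    DifferentiableAt ℝ (fun h' : EuclideanSpace ℝ (Fin d) => Eop H r h' φ x) h ∧
    ∀ e : EuclideanSpace ℝ (Fin d),
      fderiv ℝ (fun h' : EuclideanSpace ℝ (Fin d) => Eop H r h' φ x) h e =
        H (2 - ‖x - h‖ / r) • (⨍ y in ball h r, fderiv ℝ φ y e)
        - fderiv ℝ (fun v : EuclideanSpace ℝ (Fin d) => H (2 - ‖v‖ / r)) (x - h) e •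
            (⨍ y in ball h r, φ y)
        - fderiv ℝ (fun v : EuclideanSpace ℝ (Fin d) => H (‖v‖ / r - 1)) (x - h) e • φ x := by
  have dA := cutA_diff (d := d) hH hH1 hr
  have dB := cutB_diff (d := d) hH hH0 hr
  set aA := fderiv ℝ (fun v : EuclideanSpace ℝ (Fin d) => H (2 - ‖v‖ / r)) (x - h) with haA
  set aB := fderiv ℝ (fun v : EuclideanSpace ℝ (Fin d) => H (‖v‖ / r - 1)) (x - h) with haB
  have hsub : HasFDerivAt (fun h' : EuclideanSpace ℝ (Fin d) => x - h')
      (-(ContinuousLinearMap.id ℝ (EuclideanSpace ℝ (Fin d)))) h :=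
    (hasFDerivAt_id h).const_sub x
  have hcAh : HasFDerivAt (fun h' : EuclideanSpace ℝ (Fin d) => H (2 - ‖x - h'‖ / r))
      (aA.comp (-(ContinuousLinearMap.id ℝ (EuclideanSpace ℝ (Fin d))))) h :=
    HasFDerivAt.comp h ((dA (x - h)).hasFDerivAt) hsub
  have hcBh : HasFDerivAt (fun h' : EuclideanSpace ℝ (Fin d) => H (‖x - h'‖ / r - 1))
      (aB.comp (-(ContinuousLinearMap.id ℝ (EuclideanSpace ℝ (Fin d))))) h :=
    HasFDerivAt.comp h ((dB (x - h)).hasFDerivAt) hsub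
  obtain ⟨A', hA', hA'app⟩ :
      ∃ A' : EuclideanSpace ℝ (Fin d) →L[ℝ] EuclideanSpace ℝ (Fin m),
        HasFDerivAt (fun h' : EuclideanSpace ℝ (Fin d) => ⨍ y in ball h' r, φ y) A' h ∧
        ∀ e, A' e = ⨍ y in ball h r, fderiv ℝ φ y e :=
    ⟨_, hasFDerivAt_average r φ hφ hφc h, fun e => average_fderiv_apply r φ hφ hφc h e⟩
  have hΦ : HasFDerivAt (fun h' : EuclideanSpace ℝ (Fin d) => Eop H r h' φ x)
      ((H (2 - ‖x - h‖ / r) • A'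
        + (aA.comp (-(ContinuousLinearMap.id ℝ (EuclideanSpace ℝ (Fin d))))).smulRight
            (⨍ y in ball h r, φ y))
       + (H (‖x - h‖ / r - 1) • (0 : EuclideanSpace ℝ (Fin d) →L[ℝ] EuclideanSpace ℝ (Fin m))
        + (aB.comp (-(ContinuousLinearMap.id ℝ (EuclideanSpace ℝ (Fin d))))).smulRight (φ x))) h :=
    (hcAh.smul hA').add (hcBh.smul (hasFDerivAt_const (φ x) h))
  refine ⟨hΦ.differentiableAt, fun e => ?_⟩
  rw [hΦ.fderiv]
  simp only [ContinuousLinearMap.add_apply, ContinuousLinearMap.smul_apply,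
    ContinuousLinearMap.smulRight_apply, ContinuousLinearMap.comp_apply,
    ContinuousLinearMap.neg_apply, ContinuousLinearMap.id_apply,
    ContinuousLinearMap.zero_apply, smul_zero, map_neg, hA'app e]
  module

lemma Eop_x_fderiv {H : ℝ → ℝ} (hH : ContDiff ℝ (⊤ : ℕ∞) H)
    (hH0 : ∀ Z : ℝ, Z ≤ 1 / 4 → H Z = 0) (hH1 : ∀ Z : ℝ, 3 / 4 ≤ Z → H Z = 1)
    {r : ℝ} (hr : 0 < r)
    (φ : EuclideanSpace ℝ (Fin d) → EuclideanSpace ℝ (Fin m))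
    (hφ : ContDiff ℝ (⊤ : ℕ∞) φ)
    (x h : EuclideanSpace ℝ (Fin d)) :
    ∀ e : EuclideanSpace ℝ (Fin d),
      fderiv ℝ (fun y : EuclideanSpace ℝ (Fin d) => Eop H r h φ y) x e =
        fderiv ℝ (fun v : EuclideanSpace ℝ (Fin d) => H (2 - ‖v‖ / r)) (x - h) e •
          (⨍ y in ball h r, φ y)
        + H (‖x - h‖ / r - 1) • fderiv ℝ φ x e
        + fderiv ℝ (fun v : EuclideanSpace ℝ (Fin d) => H (‖v‖ / r - 1)) (x - h) e • φ x := by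
  have dA := cutA_diff (d := d) hH hH1 hr
  have dB := cutB_diff (d := d) hH hH0 hr
  set aA := fderiv ℝ (fun v : EuclideanSpace ℝ (Fin d) => H (2 - ‖v‖ / r)) (x - h) with haA
  set aB := fderiv ℝ (fun v : EuclideanSpace ℝ (Fin d) => H (‖v‖ / r - 1)) (x - h) with haB
  have hsub : HasFDerivAt (fun y : EuclideanSpace ℝ (Fin d) => y - h)
      (ContinuousLinearMap.id ℝ (EuclideanSpace ℝ (Fin d))) x := by
    simpa using (hasFDerivAt_id x).sub_const h
  have hcAx : HasFDerivAt (fun y : EuclideanSpace ℝ (Fin d) => H (2 - ‖y - h‖ / r))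
      (aA.comp (ContinuousLinearMap.id ℝ (EuclideanSpace ℝ (Fin d)))) x :=
    by have := HasFDerivAt.comp x ((dA (x - h)).hasFDerivAt) hsub; exact this
  have hcBx : HasFDerivAt (fun y : EuclideanSpace ℝ (Fin d) => H (‖y - h‖ / r - 1))
      (aB.comp (ContinuousLinearMap.id ℝ (EuclideanSpace ℝ (Fin d)))) x :=
    by have := HasFDerivAt.comp x ((dB (x - h)).hasFDerivAt) hsub; exact this
  have hG : HasFDerivAt (fun y : EuclideanSpace ℝ (Fin d) => Eop H r h φ y)
      ((H (2 - ‖x - h‖ / r) • (0 : EuclideanSpace ℝ (Fin d) →L[ℝ] EuclideanSpace ℝ (Fin m))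
        + (aA.comp (ContinuousLinearMap.id ℝ (EuclideanSpace ℝ (Fin d)))).smulRight
            (⨍ y in ball h r, φ y))
       + (H (‖x - h‖ / r - 1) • fderiv ℝ φ x
        + (aB.comp (ContinuousLinearMap.id ℝ (EuclideanSpace ℝ (Fin d)))).smulRight (φ x))) x :=
    (hcAx.smul (hasFDerivAt_const (⨍ y in ball h r, φ y) x)).add
      (hcBx.smul ((hφ.differentiable (by simp) x).hasFDerivAt))
  intro e
  rw [hG.fderiv]
  simp only [ContinuousLinearMap.add_apply, ContinuousLinearMap.smul_apply,
    ContinuousLinearMap.smulRight_apply, ContinuousLinearMap.comp_apply,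
    ContinuousLinearMap.id_apply, ContinuousLinearMap.zero_apply, smul_zero]
  module

/-- Differentiability of `E_r(h)[φ](x)` in the center `h`, together with the identity
`∂_{h_j} E_r(h)[φ](x) = E_r(h)[∂_{x_j} φ](x) − ∂_{x_j} (E_r(h)[φ])(x)`. -/
theorem Eop_deriv_in_center {d m : ℕ} (H : ℝ → ℝ)
    (hH : ContDiff ℝ (⊤ : ℕ∞) H)
    (hH01 : ∀ Z : ℝ, 0 ≤ H Z ∧ H Z ≤ 1)
    (hH0 : ∀ Z : ℝ, Z ≤ 1 / 4 → H Z = 0)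
    (hH1 : ∀ Z : ℝ, 3 / 4 ≤ Z → H Z = 1)
    (hHsymm : ∀ Z : ℝ, deriv H Z = deriv H (1 - Z))
    (r : ℝ) (hr : 0 < r)
    (φ : EuclideanSpace ℝ (Fin d) → EuclideanSpace ℝ (Fin m))
    (hφ : ContDiff ℝ (⊤ : ℕ∞) φ) (hφc : HasCompactSupport φ) :
    ∀ x : EuclideanSpace ℝ (Fin d),
      Differentiable ℝ (fun h : EuclideanSpace ℝ (Fin d) => Eop H r h φ x) ∧
      ∀ (h : EuclideanSpace ℝ (Fin d)) (j : Fin d),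
        fderiv ℝ (fun h' : EuclideanSpace ℝ (Fin d) => Eop H r h' φ x) h
            (EuclideanSpace.single j 1) =
          Eop H r h (fun y => fderiv ℝ φ y (EuclideanSpace.single j 1)) x -
            fderiv ℝ (fun y => Eop H r h φ y) x (EuclideanSpace.single j 1) := by
  intro x
  constructor
  · intro h
    exact (Eop_center_fderiv hH hH0 hH1 hr φ hφ hφc x h).1
  · intro h j
    set e := EuclideanSpace.single j (1 : ℝ)
    rw [(Eop_center_fderiv hH hH0 hH1 hr φ hφ hφc x h).2 e,
      Eop_x_fderiv hH hH0 hH1 hr φ hφ x h e]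
    simp only [Eop]
    module
end
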